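/- Tensor enumerators are homomorphic under tensor product: let M₁, M₂ be Hermitian q^n×q^n complex matrices, N₁, N₂ Hermitian q^m×q^m complex matrices, J ⊆ {1,…,n} and K ⊆ {1,…,m}. Identifying (ℂ^q)^{⊗(n+m)} with (ℂ^q)^{⊗n}⊗(ℂ^q)^{⊗m} via the Kronecker product and J∪K with the corresponding subset of {1,…,n+m}, then for all e,e' ∈ ((ℤ/qℤ)²)^J and f,f' ∈ ((ℤ/qℤ)²)^K: A^{(J∪K)}(z; M₁⊗N₁, M₂⊗N₂)((e,f),(e',f')) = A^{(J)}(z; M₁,M₂)(e,e') · A^{(K)}(z; N₁,N₂)(f,f'), and the same identity holds with B in place of A throughout. -/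
import Mathlib


open Matrix Polynomial
open scoped BigOperators ComplexConjugate Kronecker

noncomputable section

/-- Generalized Pauli `X` (cyclic shift) on `ℂ^q`. -/
def Xmat (q : ℕ) : Matrix (Fin q) (Fin q) ℂ :=
  fun i j => if (i : ℕ) = ((j : ℕ) + 1) % q then 1 else 0

/-- Generalized Pauli `Z` (clock) on `ℂ^q`, `Z|j⟩ = ζ^j |j⟩` with `ζ = exp(2πi/q)`. -/
def Zmat (q : ℕ) : Matrix (Fin q) (Fin q) ℂ :=
  Matrix.diagonal fun j => Complex.exp (2 * (Real.pi : ℂ) * Complex.I / (q : ℂ)) ^ (j : ℕ)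

/-- Single-qudit Pauli `E(a,b) = X^a Z^b` for a label `(a,b) ∈ (ℤ/qℤ)²`. -/
def Epauli (q : ℕ) (p : ZMod q × ZMod q) : Matrix (Fin q) (Fin q) ℂ :=
  Xmat q ^ p.1.val * Zmat q ^ p.2.val

/-- Multi-qudit Pauli `E(p) = E(p₁) ⊗ ⋯ ⊗ E(pₙ)` on the space indexed by `ι → Fin q`. -/
def EV (q : ℕ) {ι : Type} [Fintype ι] (p : ι → ZMod q × ZMod q) :
    Matrix (ι → Fin q) (ι → Fin q) ℂ :=
  fun v w => ∏ i, Epauli q (p i) (v i) (w i)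

/-- Weight of a Pauli label vector: the number of non-identity factors. -/
def wtL (q : ℕ) {ι : Type} [Fintype ι] (p : ι → ZMod q × ZMod q) : ℕ :=
  (Finset.univ.filter fun i => p i ≠ 0).card

/-- Combine a label on legs `J` and a label on the complementary legs into a full label. -/
def glue {ι α : Type} [Fintype ι] [DecidableEq ι] (J : Finset ι)
    (e : {j // j ∈ J} → α) (f : {j // j ∈ Jᶜ} → α) : ι → α :=
  fun i => if h : i ∈ J then e ⟨i, h⟩ else f ⟨i, Finset.mem_compl.mpr h⟩

/-- Tensor weight enumerator `A^{(J)}(z; M₁, M₂)`, valued in `ℂ[z]`. -/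
def tA (q : ℕ) [NeZero q] {ι : Type} [Fintype ι] [DecidableEq ι] (J : Finset ι)
    (M₁ M₂ : Matrix (ι → Fin q) (ι → Fin q) ℂ)
    (e e' : {j // j ∈ J} → ZMod q × ZMod q) : Polynomial ℂ :=
  ∑ f : {j // j ∈ Jᶜ} → ZMod q × ZMod q,
    Polynomial.C (Matrix.trace ((EV q (glue J e f))ᴴ * M₁) *
        Matrix.trace (EV q (glue J e' f) * M₂)) * Polynomial.X ^ wtL q f

/-- Tensor weight enumerator `B^{(J)}(z; M₁, M₂)`, valued in `ℂ[z]`. -/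
def tB (q : ℕ) [NeZero q] {ι : Type} [Fintype ι] [DecidableEq ι] (J : Finset ι)
    (M₁ M₂ : Matrix (ι → Fin q) (ι → Fin q) ℂ)
    (e e' : {j // j ∈ J} → ZMod q × ZMod q) : Polynomial ℂ :=
  ∑ f : {j // j ∈ Jᶜ} → ZMod q × ZMod q,
    Polynomial.C (Matrix.trace ((EV q (glue J e f))ᴴ * M₁ * EV q (glue J e' f) * M₂)) *
      Polynomial.X ^ wtL q f

/-- Kronecker product of an `n`-qudit matrix and an `m`-qudit matrix, realized on the
space indexed by `Fin n ⊕ Fin m → Fin q`. -/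
def prodMat (q n m : ℕ) (M : Matrix ((Fin n) → Fin q) ((Fin n) → Fin q) ℂ)
    (N : Matrix ((Fin m) → Fin q) ((Fin m) → Fin q) ℂ) :
    Matrix ((Fin n ⊕ Fin m) → Fin q) ((Fin n ⊕ Fin m) → Fin q) ℂ :=
  fun v w => M (v ∘ Sum.inl) (w ∘ Sum.inl) * N (v ∘ Sum.inr) (w ∘ Sum.inr)

/-- Combine a label on `J ⊆ Fin n` and a label on `K ⊆ Fin m` into a label on
`J.disjSum K ⊆ Fin n ⊕ Fin m`. -/
def pairLabel {n m : ℕ} {α : Type} (J : Finset (Fin n)) (K : Finset (Fin m))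
    (e : {j // j ∈ J} → α) (f : {k // k ∈ K} → α) :
    {x // x ∈ J.disjSum K} → α := fun x =>
  match x with
  | ⟨Sum.inl a, h⟩ => e ⟨a, Finset.inl_mem_disjSum.mp h⟩
  | ⟨Sum.inr b, h⟩ => f ⟨b, Finset.inr_mem_disjSum.mp h⟩

section Aux

variable {q n m : ℕ}

lemma EV_sum (q : ℕ) {n m : ℕ} (p : (Fin n ⊕ Fin m) → ZMod q × ZMod q) :
    EV q p = prodMat q n m (EV q (p ∘ Sum.inl)) (EV q (p ∘ Sum.inr)) := by
  funext v w
  simp [EV, prodMat, Fintype.prod_sum_type, Function.comp]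

lemma prodMat_conjT (M : Matrix ((Fin n) → Fin q) ((Fin n) → Fin q) ℂ)
    (N : Matrix ((Fin m) → Fin q) ((Fin m) → Fin q) ℂ) :
    (prodMat q n m M N)ᴴ = prodMat q n m Mᴴ Nᴴ := by
  funext v w
  simp [prodMat, Matrix.conjTranspose_apply, _root_.map_mul]

lemma prodMat_mul (A C : Matrix ((Fin n) → Fin q) ((Fin n) → Fin q) ℂ)
    (B D : Matrix ((Fin m) → Fin q) ((Fin m) → Fin q) ℂ) :
    prodMat q n m A B * prodMat q n m C D = prodMat q n m (A * C) (B * D) := by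
  funext v w
  simp only [prodMat, Matrix.mul_apply]
  rw [← Equiv.sum_comp (Equiv.sumArrowEquivProdArrow (Fin n) (Fin m) (Fin q)).symm
    (fun u => (A (v ∘ Sum.inl) (u ∘ Sum.inl) * B (v ∘ Sum.inr) (u ∘ Sum.inr)) *
      (C (u ∘ Sum.inl) (w ∘ Sum.inl) * D (u ∘ Sum.inr) (w ∘ Sum.inr))),
    Fintype.sum_prod_type, Finset.sum_mul_sum]
  refine Finset.sum_congr rfl fun u1 _ => Finset.sum_congr rfl fun u2 _ => ?_
  have h1 : ((Equiv.sumArrowEquivProdArrow (Fin n) (Fin m) (Fin q)).symm (u1, u2)) ∘ Sum.inl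
      = u1 := rfl
  have h2 : ((Equiv.sumArrowEquivProdArrow (Fin n) (Fin m) (Fin q)).symm (u1, u2)) ∘ Sum.inr
      = u2 := rfl
  rw [h1, h2]; ring

lemma prodMat_trace (M : Matrix ((Fin n) → Fin q) ((Fin n) → Fin q) ℂ)
    (N : Matrix ((Fin m) → Fin q) ((Fin m) → Fin q) ℂ) :
    Matrix.trace (prodMat q n m M N) = Matrix.trace M * Matrix.trace N := by
  simp only [Matrix.trace, Matrix.diag, prodMat]
  rw [← Equiv.sum_comp (Equiv.sumArrowEquivProdArrow (Fin n) (Fin m) (Fin q)).symm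
    (fun v => M (v ∘ Sum.inl) (v ∘ Sum.inl) * N (v ∘ Sum.inr) (v ∘ Sum.inr)),
    Fintype.sum_prod_type, Finset.sum_mul_sum]
  refine Finset.sum_congr rfl fun x _ => Finset.sum_congr rfl fun y _ => ?_
  rfl

lemma memL {J : Finset (Fin n)} {K : Finset (Fin m)} {a : Fin n} (h : a ∈ Jᶜ) :
    Sum.inl a ∈ (J.disjSum K)ᶜ := by
  simp only [Finset.mem_compl, Finset.inl_mem_disjSum] at *; exact h

lemma memR {J : Finset (Fin n)} {K : Finset (Fin m)} {b : Fin m} (h : b ∈ Kᶜ) :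
    Sum.inr b ∈ (J.disjSum K)ᶜ := by
  simp only [Finset.mem_compl, Finset.inr_mem_disjSum] at *; exact h

lemma memL' {J : Finset (Fin n)} {K : Finset (Fin m)} {a : Fin n}
    (h : Sum.inl a ∈ (J.disjSum K)ᶜ) : a ∈ Jᶜ := by
  simp only [Finset.mem_compl, Finset.inl_mem_disjSum] at *; exact h

lemma memR' {J : Finset (Fin n)} {K : Finset (Fin m)} {b : Fin m}
    (h : Sum.inr b ∈ (J.disjSum K)ᶜ) : b ∈ Kᶜ := by
  simp only [Finset.mem_compl, Finset.inr_mem_disjSum] at *; exact h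

/-- Restriction of a label on `(J.disjSum K)ᶜ` to `Jᶜ`. -/
def gInl {α : Type} (J : Finset (Fin n)) (K : Finset (Fin m))
    (g : {x // x ∈ (J.disjSum K)ᶜ} → α) : {j // j ∈ Jᶜ} → α :=
  fun j => g ⟨Sum.inl j.1, memL j.2⟩

/-- Restriction of a label on `(J.disjSum K)ᶜ` to `Kᶜ`. -/
def gInr {α : Type} (J : Finset (Fin n)) (K : Finset (Fin m))
    (g : {x // x ∈ (J.disjSum K)ᶜ} → α) : {k // k ∈ Kᶜ} → α :=
  fun k => g ⟨Sum.inr k.1, memR k.2⟩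

/-- Index equivalence between `Jᶜ ⊕ Kᶜ` and `(J.disjSum K)ᶜ`. -/
def ie (J : Finset (Fin n)) (K : Finset (Fin m)) :
    ({j // j ∈ Jᶜ} ⊕ {k // k ∈ Kᶜ}) ≃ {x // x ∈ (J.disjSum K)ᶜ} where
  toFun x := match x with
    | .inl j => ⟨Sum.inl j.1, memL j.2⟩
    | .inr k => ⟨Sum.inr k.1, memR k.2⟩
  invFun x := match x with
    | ⟨Sum.inl a, h⟩ => .inl ⟨a, memL' h⟩
    | ⟨Sum.inr b, h⟩ => .inr ⟨b, memR' h⟩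
  left_inv x := by rcases x with ⟨a, h⟩ | ⟨b, h⟩ <;> rfl
  right_inv x := by rcases x with ⟨a | b, h⟩ <;> rfl

/-- Function-space equivalence: pairs of labels on `Jᶜ`, `Kᶜ` vs labels on `(J.disjSum K)ᶜ`. -/
def fe {α : Type} (J : Finset (Fin n)) (K : Finset (Fin m)) :
    (({j // j ∈ Jᶜ} → α) × ({k // k ∈ Kᶜ} → α)) ≃ ({x // x ∈ (J.disjSum K)ᶜ} → α) where
  toFun p x := match x with
    | ⟨Sum.inl a, h⟩ => p.1 ⟨a, memL' h⟩
    | ⟨Sum.inr b, h⟩ => p.2 ⟨b, memR' h⟩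
  invFun g := (gInl J K g, gInr J K g)
  left_inv p := rfl
  right_inv g := by funext x; rcases x with ⟨a | b, h⟩ <;> rfl

lemma wt_split (J : Finset (Fin n)) (K : Finset (Fin m))
    (g : {x // x ∈ (J.disjSum K)ᶜ} → ZMod q × ZMod q) :
    wtL q g = wtL q (gInl J K g) + wtL q (gInr J K g) := by
  classical
  simp only [wtL, Finset.card_filter]
  rw [← Equiv.sum_comp (ie J K) (fun y => if g y ≠ 0 then 1 else 0), Fintype.sum_sum_type]
  rfl

lemma glue_inl {α : Type} (J : Finset (Fin n)) (K : Finset (Fin m))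
    (e : {j // j ∈ J} → α) (f : {k // k ∈ K} → α)
    (g : {x // x ∈ (J.disjSum K)ᶜ} → α) :
    (glue (J.disjSum K) (pairLabel J K e f) g) ∘ Sum.inl = glue J e (gInl J K g) := by
  funext i
  simp only [Function.comp, glue, gInl]
  by_cases h : i ∈ J
  · rw [dif_pos (Finset.inl_mem_disjSum.mpr h), dif_pos h]; rfl
  · rw [dif_neg (fun hh => h (Finset.inl_mem_disjSum.mp hh)), dif_neg h]

lemma glue_inr {α : Type} (J : Finset (Fin n)) (K : Finset (Fin m))
    (e : {j // j ∈ J} → α) (f : {k // k ∈ K} → α)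
    (g : {x // x ∈ (J.disjSum K)ᶜ} → α) :
    (glue (J.disjSum K) (pairLabel J K e f) g) ∘ Sum.inr = glue K f (gInr J K g) := by
  funext i
  simp only [Function.comp, glue, gInr]
  by_cases h : i ∈ K
  · rw [dif_pos (Finset.inr_mem_disjSum.mpr h), dif_pos h]; rfl
  · rw [dif_neg (fun hh => h (Finset.inr_mem_disjSum.mp hh)), dif_neg h]

end Aux

/-- Tensor enumerators are homomorphic under tensor products. -/
theorem stmt14 (q n m : ℕ) [NeZero q] (hq : 2 ≤ q) (hn : 1 ≤ n) (hm : 1 ≤ m)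
    (M₁ M₂ : Matrix ((Fin n) → Fin q) ((Fin n) → Fin q) ℂ)
    (hM₁ : M₁.IsHermitian) (hM₂ : M₂.IsHermitian)
    (N₁ N₂ : Matrix ((Fin m) → Fin q) ((Fin m) → Fin q) ℂ)
    (hN₁ : N₁.IsHermitian) (hN₂ : N₂.IsHermitian)
    (J : Finset (Fin n)) (K : Finset (Fin m))
    (e e' : {j // j ∈ J} → ZMod q × ZMod q)
    (f f' : {k // k ∈ K} → ZMod q × ZMod q) :
    tA q (J.disjSum K) (prodMat q n m M₁ N₁) (prodMat q n m M₂ N₂)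
        (pairLabel J K e f) (pairLabel J K e' f') =
      tA q J M₁ M₂ e e' * tA q K N₁ N₂ f f' ∧
    tB q (J.disjSum K) (prodMat q n m M₁ N₁) (prodMat q n m M₂ N₂)
        (pairLabel J K e f) (pairLabel J K e' f') =
      tB q J M₁ M₂ e e' * tB q K N₁ N₂ f f' := by
  classical
  constructor
  · unfold tA
    rw [← Equiv.sum_comp (fe (α := ZMod q × ZMod q) J K), Fintype.sum_prod_type,
      Finset.sum_mul_sum]
    refine Finset.sum_congr rfl fun g1 _ => Finset.sum_congr rfl fun g2 _ => ?_
    set G := fe J K (g1, g2) with hG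
    have h1 : glue (J.disjSum K) (pairLabel J K e f) G ∘ Sum.inl = glue J e g1 :=
      glue_inl J K e f G
    have h2 : glue (J.disjSum K) (pairLabel J K e f) G ∘ Sum.inr = glue K f g2 :=
      glue_inr J K e f G
    have h1' : glue (J.disjSum K) (pairLabel J K e' f') G ∘ Sum.inl = glue J e' g1 :=
      glue_inl J K e' f' G
    have h2' : glue (J.disjSum K) (pairLabel J K e' f') G ∘ Sum.inr = glue K f' g2 :=
      glue_inr J K e' f' G
    have hw : wtL q G = wtL q g1 + wtL q g2 := wt_split J K G
    rw [EV_sum q (glue (J.disjSum K) (pairLabel J K e f) G),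
      EV_sum q (glue (J.disjSum K) (pairLabel J K e' f') G),
      h1, h2, h1', h2', prodMat_conjT, prodMat_mul, prodMat_mul,
      prodMat_trace, prodMat_trace, hw, pow_add]
    simp only [_root_.map_mul]
    ring
  · unfold tB
    rw [← Equiv.sum_comp (fe (α := ZMod q × ZMod q) J K), Fintype.sum_prod_type,
      Finset.sum_mul_sum]
    refine Finset.sum_congr rfl fun g1 _ => Finset.sum_congr rfl fun g2 _ => ?_
    set G := fe J K (g1, g2) with hG
    have h1 : glue (J.disjSum K) (pairLabel J K e f) G ∘ Sum.inl = glue J e g1 :=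
      glue_inl J K e f G
    have h2 : glue (J.disjSum K) (pairLabel J K e f) G ∘ Sum.inr = glue K f g2 :=
      glue_inr J K e f G
    have h1' : glue (J.disjSum K) (pairLabel J K e' f') G ∘ Sum.inl = glue J e' g1 :=
      glue_inl J K e' f' G
    have h2' : glue (J.disjSum K) (pairLabel J K e' f') G ∘ Sum.inr = glue K f' g2 :=
      glue_inr J K e' f' G
    have hw : wtL q G = wtL q g1 + wtL q g2 := wt_split J K G
    rw [EV_sum q (glue (J.disjSum K) (pairLabel J K e f) G),
      EV_sum q (glue (J.disjSum K) (pairLabel J K e' f') G),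
      h1, h2, h1', h2', prodMat_conjT, prodMat_mul, prodMat_mul, prodMat_mul,
      prodMat_trace, hw, pow_add]
    simp only [_root_.map_mul]
    ring
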